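/- arXiv:2006.12385 — 12 statements merged into one kernel-verified Lean document; each statement's English description precedes it below -/
import Mathlib

section
/- Let X and Y be compact metric spaces and φ : X → Y a continuous open surjective map. Let 𝒱 be the collection of all open subsets V of X with φ(V) = Y. Then there exists a countable subcollection {V_i} of 𝒱 such that every element of 𝒱 contains some V_i. -/
/-- For a continuous open surjection φ between compact metric spaces,
the collection 𝒱 of open sets with full image has a countable subcollection
{V i} such that every member of 𝒱 contains some V i. -/
theorem stmt_0 {X Y : Type*} [MetricSpace X] [CompactSpace X]
    [MetricSpace Y] [CompactSpace Y] (φ : X → Y)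
    (hc : Continuous φ) (ho : IsOpenMap φ) (hs : Function.Surjective φ) :
    ∃ V : ℕ → Set X, (∀ i, IsOpen (V i) ∧ φ '' V i = Set.univ) ∧
      ∀ W : Set X, IsOpen W → φ '' W = Set.univ → ∃ i, V i ⊆ W := by
  have himuniv : φ '' Set.univ = Set.univ := by
    rw [Set.image_univ, hs.range_eq]
  by_cases hX : Nonempty X
  · obtain ⟨B, hBc, -, hB⟩ := TopologicalSpace.exists_countable_basis X
    have hBne : B.Nonempty := by
      obtain ⟨x⟩ := hX
      obtain ⟨b, hb, -, -⟩ := hB.exists_subset_of_mem_open (Set.mem_univ x) isOpen_univ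
      exact ⟨b, hb⟩
    obtain ⟨f, hf⟩ := Set.Countable.exists_eq_range hBc hBne
    have hfopen : ∀ i, IsOpen (f i) := fun i => hB.isOpen (hf ▸ Set.mem_range_self i)
    have key : ∀ W : Set X, IsOpen W → φ '' W = Set.univ →
        ∃ S : Finset ℕ, (⋃ i ∈ S, f i) ⊆ W ∧ φ '' (⋃ i ∈ S, f i) = Set.univ := by
      intro W hW hWim
      have hcover : Set.univ ⊆ ⋃ j : {i : ℕ // f i ⊆ W}, φ '' f j.1 := by
        intro y _
        have hy : y ∈ φ '' W := hWim ▸ Set.mem_univ y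
        obtain ⟨x, hxW, rfl⟩ := hy
        obtain ⟨b, hbB, hxb, hbW⟩ := hB.exists_subset_of_mem_open hxW hW
        have : b ∈ Set.range f := hf ▸ hbB
        obtain ⟨i, rfl⟩ := this
        exact Set.mem_iUnion.2 ⟨⟨i, hbW⟩, ⟨x, hxb, rfl⟩⟩
      obtain ⟨T, hT⟩ := isCompact_univ.elim_finite_subcover
        (fun j : {i : ℕ // f i ⊆ W} => φ '' f j.1) (fun j => ho _ (hfopen _)) hcover
      refine ⟨T.image Subtype.val, ?_, ?_⟩
      · intro x hx
        simp only [Set.mem_iUnion, Finset.mem_image] at hx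
        obtain ⟨i, ⟨⟨⟨j, hj⟩, hjT, rfl⟩, hxi⟩⟩ := hx
        exact hj hxi
      · apply Set.eq_univ_of_univ_subset
        intro y hy
        have := hT hy
        simp only [Set.mem_iUnion] at this
        obtain ⟨⟨j, hj⟩, hjT, x, hx, rfl⟩ := this
        exact ⟨x, Set.mem_biUnion (Finset.mem_image_of_mem _ hjT) hx, rfl⟩
    set 𝒯 : Set (Set X) :=
      {U | (∃ S : Finset ℕ, U = ⋃ i ∈ S, f i) ∧ φ '' U = Set.univ} with h𝒯
    have h𝒯c : 𝒯.Countable := by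
      have : 𝒯 ⊆ Set.range (fun S : Finset ℕ => ⋃ i ∈ S, f i) := by
        rintro U ⟨⟨S, rfl⟩, -⟩
        exact ⟨S, rfl⟩
      exact (Set.countable_range _).mono this
    have h𝒯ne : 𝒯.Nonempty := by
      obtain ⟨S, -, hS2⟩ := key Set.univ isOpen_univ himuniv
      exact ⟨_, ⟨S, rfl⟩, hS2⟩
    obtain ⟨V, hV⟩ := Set.Countable.exists_eq_range h𝒯c h𝒯ne
    refine ⟨V, ?_, ?_⟩
    · intro i
      have : V i ∈ 𝒯 := hV ▸ Set.mem_range_self i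
      obtain ⟨⟨S, heq⟩, him⟩ := this
      rw [heq]
      exact ⟨isOpen_biUnion fun i _ => hfopen i, heq ▸ him⟩
    · intro W hW hWim
      obtain ⟨S, hS1, hS2⟩ := key W hW hWim
      have : (⋃ i ∈ S, f i) ∈ 𝒯 := ⟨⟨S, rfl⟩, hS2⟩
      rw [hV] at this
      obtain ⟨i, hi⟩ := this
      exact ⟨i, hi ▸ hS1⟩
  · refine ⟨fun _ => Set.univ, fun i => ⟨isOpen_univ, himuniv⟩, fun W _ _ => ⟨0, ?_⟩⟩
    intro x _
    exact absurd ⟨x⟩ hX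
end

section
/- Let X and Y be compact metric spaces and φ : X → Y a continuous open surjective map. If V ⊆ X is open and φ(V) = Y, then there exists a closed subset L ⊆ V with φ(L) = Y. -/
/-- If φ : X → Y is a continuous open surjection of compact metric
spaces and V is open with φ(V) = Y, then some closed L ⊆ V has φ(L) = Y. -/
theorem stmt_1 {X Y : Type*} [MetricSpace X] [CompactSpace X]
    [MetricSpace Y] [CompactSpace Y] (φ : X → Y)
    (hc : Continuous φ) (ho : IsOpenMap φ) (hs : Function.Surjective φ)
    (V : Set X) (hV : IsOpen V) (hVY : φ '' V = Set.univ) :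
    ∃ L : Set X, L ⊆ V ∧ IsClosed L ∧ φ '' L = Set.univ := by
  -- for each y, choose x ∈ V with φ x = y and r > 0 with closedBall x r ⊆ V
  have key : ∀ y : Y, ∃ x : X, ∃ r : ℝ, 0 < r ∧ Metric.closedBall x r ⊆ V ∧ φ x = y := by
    intro y
    have : y ∈ φ '' V := by rw [hVY]; trivial
    obtain ⟨x, hxV, hxy⟩ := this
    obtain ⟨ε, hε, hball⟩ := Metric.isOpen_iff.mp hV x hxV
    exact ⟨x, ε / 2, by linarith,
      (Metric.closedBall_subset_ball (by linarith)).trans hball, hxy⟩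
  choose x r hr hsub hφ using key
  -- open cover of Y
  have hcov : Set.univ ⊆ ⋃ y : Y, φ '' Metric.ball (x y) (r y) := by
    intro z _
    exact Set.mem_iUnion.mpr ⟨z, ⟨x z, Metric.mem_ball_self (hr z), hφ z⟩⟩
  obtain ⟨t, ht⟩ := isCompact_univ.elim_finite_subcover
    (fun y : Y => φ '' Metric.ball (x y) (r y))
    (fun y => ho _ Metric.isOpen_ball) hcov
  refine ⟨⋃ y ∈ t, Metric.closedBall (x y) (r y), ?_, ?_, ?_⟩
  · exact Set.iUnion₂_subset fun y _ => hsub y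
  · exact isClosed_biUnion_finset fun y _ => Metric.isClosed_closedBall
  · apply Set.eq_univ_of_univ_subset
    intro z hz
    obtain ⟨_, ⟨y, rfl⟩, _, ⟨hyt, rfl⟩, w, hw, hwz⟩ := ht hz
    exact ⟨w, Set.mem_biUnion hyt (Metric.ball_subset_closedBall hw), hwz⟩
end

section
/- Let (X,T) be a topological dynamical system on a compact metric space and let d, n be positive integers. Then the regionally proximal relation of order d for T equals the regionally proximal relation of order d for T^n: RP^{[d]}(X,T) = RP^{[d]}(X,T^n). -/
/-!
Every cube of `T ^ n` is a cube of `T` (scale the generators by `n`), so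
`RP^[d](X, T ^ n) ⊆ RP^[d](X, T)`. Conversely, divide the generators `m` of a `T`-cube by `n`,
`m = n q + r` with `0 ≤ r < n`. Each vertex `(T ^ n) ^ (q·ε)` of the `q`-cube is the vertex
`T ^ (m·ε)` of the `m`-cube followed by `T ^ (-(r·ε))`, with `0 ≤ r·ε ≤ d n`. On a compact space
these finitely many maps are uniformly equicontinuous, so `δ'`-close vertices of the `m`-cube give
`δ`-close vertices of the `q`-cube.
-/

/-- The regionally proximal relation of order `d` for the ℤ-system generated by
the invertible map `S` (here `S` is the underlying bijection of a homeomorphism,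
and `S ^ n` for `n : ℤ` is its `n`-th iterate). -/
def RP {X : Type*} [MetricSpace X] (d : ℕ) (S : Equiv.Perm X) : Set (X × X) :=
  {p | ∀ δ > (0 : ℝ), ∃ x' y' : X, ∃ n : Fin d → ℤ,
    dist p.1 x' < δ ∧ dist p.2 y' < δ ∧
    ∀ ε : Fin d → Bool, ε ≠ (fun _ => false) →
      dist ((S ^ (∑ i, if ε i then n i else 0)) x')
           ((S ^ (∑ i, if ε i then n i else 0)) y') < δ}

theorem Homeomorph.continuous_toEquiv_zpow {X : Type*} [TopologicalSpace X] (T : X ≃ₜ X)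
    (k : ℤ) : Continuous ⇑(T.toEquiv ^ k) := by
  let toPerm : (X ≃ₜ X) →* Equiv.Perm X := ⟨⟨Homeomorph.toEquiv, rfl⟩, fun _ _ => rfl⟩
  rw [show T.toEquiv ^ k = toPerm (T ^ k) from (map_zpow toPerm T k).symm]
  exact (T ^ k).continuous

section

variable {ι : Type*} [Fintype ι]

theorem Int.sum_ite_ediv_emod (ε : ι → Bool) (m : ι → ℤ) (n : ℤ) :
    n * (∑ i, if ε i then m i / n else 0) + (∑ i, if ε i then m i % n else 0) =
      ∑ i, if ε i then m i else 0 := by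
  rw [Finset.mul_sum, ← Finset.sum_add_distrib]
  refine Finset.sum_congr rfl fun i _ => ?_
  split_ifs
  · exact Int.mul_ediv_add_emod (m i) n
  · simp

theorem Int.sum_ite_emod_mem_Icc (ε : ι → Bool) (m : ι → ℤ) {n : ℤ} (hn : 0 < n) :
    (∑ i, if ε i then m i % n else 0) ∈ Set.Icc 0 (Fintype.card ι * n) := by
  have hbound : ∀ i, (if ε i then m i % n else 0) ∈ Set.Icc 0 n := fun i => by
    split_ifs
    · exact ⟨Int.emod_nonneg _ hn.ne', (Int.emod_lt_of_pos _ hn).le⟩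
    · exact ⟨le_rfl, hn.le⟩
  refine ⟨Finset.sum_nonneg fun i _ => (hbound i).1, ?_⟩
  calc (∑ i, if ε i then m i % n else 0) ≤ ∑ _i : ι, n :=
        Finset.sum_le_sum fun i _ => (hbound i).2
    _ = Fintype.card ι * n := by simp

end

section

variable {X : Type*} [MetricSpace X] {d : ℕ}

theorem RP_pow_subset (S : Equiv.Perm X) (n : ℕ) : RP d (S ^ n) ⊆ RP d S := by
  intro p hp δ hδ
  obtain ⟨x', y', q, hx, hy, hq⟩ := hp δ hδ
  refine ⟨x', y', fun i => n * q i, hx, hy, fun ε hε => ?_⟩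
  have hsum : (∑ i, if ε i then (n : ℤ) * q i else 0) = n * ∑ i, if ε i then q i else 0 := by
    simp only [Finset.mul_sum, mul_ite, mul_zero]
  rw [hsum, zpow_mul, zpow_natCast]
  exact hq ε hε

theorem RP_subset_RP_pow {S : Equiv.Perm X} (hS : ∀ j : ℕ, UniformContinuous ⇑(S ^ (-(j : ℤ))))
    {n : ℕ} (hn : 0 < n) : RP d S ⊆ RP d (S ^ n) := by
  intro p hp δ hδ
  have hequi : UniformEquicontinuous fun j : Fin (d * n + 1) => ⇑(S ^ (-(j : ℤ))) :=
    uniformEquicontinuous_finite.2 fun j => hS j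
  obtain ⟨δ', hδ', hclose⟩ := Metric.uniformEquicontinuous_iff.1 hequi δ hδ
  obtain ⟨x', y', m, hx, hy, hm⟩ := hp (min δ δ') (lt_min hδ hδ')
  refine ⟨x', y', fun i => m i / n, hx.trans_le (min_le_left _ _),
    hy.trans_le (min_le_left _ _), fun ε hε => ?_⟩
  have hdiv := Int.sum_ite_ediv_emod ε m n
  obtain ⟨hr0, hrle⟩ := Int.sum_ite_emod_mem_Icc ε m (Int.natCast_pos.2 hn)
  obtain ⟨j, hj⟩ := Int.eq_ofNat_of_zero_le hr0
  rw [hj] at hdiv hrle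
  rw [Fintype.card_fin] at hrle
  have hvertex : (S ^ n) ^ (∑ i, if ε i then m i / (n : ℤ) else 0) =
      S ^ (-(j : ℤ)) * S ^ (∑ i, if ε i then m i else 0) := by
    rw [← zpow_natCast, ← zpow_mul, ← zpow_add]
    congr 1
    omega
  beta_reduce
  rw [hvertex, Equiv.Perm.mul_apply, Equiv.Perm.mul_apply]
  exact hclose _ _ ((hm ε hε).trans_le (min_le_right _ _)) ⟨j, by omega⟩

end

theorem stmt_2_general {X : Type*} [MetricSpace X] [CompactSpace X] (T : X ≃ₜ X)
    (d n : ℕ) (hn : 1 ≤ n) :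
    RP d T.toEquiv = RP d (T.toEquiv ^ n) :=
  (RP_subset_RP_pow (fun _ => CompactSpace.uniformContinuous_of_continuous
    (T.continuous_toEquiv_zpow _)) hn).antisymm (RP_pow_subset _ n)

/-- For any t.d.s. `(X,T)` and positive integers `d`, `n`,
`RP^[d](X,T) = RP^[d](X,T^n)`. -/
theorem stmt_2 {X : Type*} [MetricSpace X] [CompactSpace X] (T : X ≃ₜ X)
    (d n : ℕ) (hd : 1 ≤ d) (hn : 1 ≤ n) :
    RP d T.toEquiv = RP d (T.toEquiv ^ n) :=
  stmt_2_general T d n hn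
end

section
/- Let (X,T) be a minimal topological dynamical system on a compact metric space and d ≥ 3. If x, y ∈ X are such that the point (x, x, …, x, y) (with x in the first d−1 coordinates and y in the last) lies in N_d(X) = closure of the orbit of the diagonal Δ_d(X) under τ_d = T × T² × … × T^d, then (x,y) ∈ AP^{[d−2]}(X,T). -/
/-- `AP^[d]`, the regionally proximal relation of order `d` along arithmetic
progressions. -/
def AP {X : Type*} [MetricSpace X] (d : ℕ) (S : Equiv.Perm X) : Set (X × X) :=
  {p | ∀ δ > (0 : ℝ), ∃ x' y' : X, ∃ n : ℤ,
    dist p.1 x' < δ ∧ dist p.2 y' < δ ∧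
    ∀ i : ℕ, 1 ≤ i → i ≤ d →
      dist ((S ^ ((i : ℤ) * n)) x') ((S ^ ((i : ℤ) * n)) y') < δ}

/-- `N_d(X)`: the closure of the orbit of the diagonal under the group generated
by `T×T²×…×T^d` and `T×…×T`, i.e. the closure of
`{(T^{k+l}x, T^{k+2l}x, …, T^{k+dl}x) : x ∈ X, k l ∈ ℤ}`. -/
def NdFull {X : Type*} [MetricSpace X] (d : ℕ) (S : Equiv.Perm X) :
    Set (Fin d → X) :=
  closure {v | ∃ (x : X) (k l : ℤ), v = fun i : Fin d => (S ^ (k + ((i : ℕ) + 1) * l)) x}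

/-- if `(X,T)` is minimal, `d ≥ 3` and `(x,…,x,y) ∈ N_d(X)`
(`x` in the first `d-1` coordinates), then `(x,y) ∈ AP^[d-2](X,T)`. -/
theorem stmt_4 {X : Type*} [MetricSpace X] [CompactSpace X] (T : X ≃ₜ X)
    (hmin : ∀ x : X, Dense {y | ∃ n : ℤ, y = (T.toEquiv ^ n) x})
    (d : ℕ) (hd : 3 ≤ d) (x y : X)
    (hmem : (fun i : Fin d => if (i : ℕ) + 1 = d then y else x) ∈
      NdFull d T.toEquiv) :
    (x, y) ∈ AP (d - 2) T.toEquiv := by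
  intro δ hδ
  rw [NdFull, Metric.mem_closure_iff] at hmem
  obtain ⟨v, ⟨z, k, l, rfl⟩, hv⟩ := hmem (δ / 3) (by linarith)
  have key : ∀ m : ℕ, 1 ≤ m → m ≤ d →
      dist (if m = d then y else x) ((T.toEquiv ^ (k + (m : ℤ) * l)) z) < δ / 3 := by
    intro m h1 h2
    have hj : m - 1 < d := by omega
    have h := dist_le_pi_dist (fun i : Fin d => if (i : ℕ) + 1 = d then y else x)
      (fun i : Fin d => (T.toEquiv ^ (k + ((i : ℕ) + 1) * l)) z) ⟨m - 1, hj⟩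
    have hm : (m - 1 : ℕ) + 1 = m := by omega
    simp only [hm] at h
    have : ((m - 1 : ℕ) : ℤ) + 1 = (m : ℤ) := by push_cast [hm]; omega
    rw [this] at h
    exact lt_of_le_of_lt h hv
  refine ⟨(T.toEquiv ^ (k + ((d - 1 : ℕ) : ℤ) * l)) z,
          (T.toEquiv ^ (k + (d : ℤ) * l)) z, -l, ?_, ?_, ?_⟩
  · have := key (d - 1) (by omega) (by omega)
    rw [if_neg (by omega)] at this
    exact lt_trans this (by linarith)
  · have := key d (by omega) le_rfl
    rw [if_pos rfl] at this
    exact lt_trans this (by linarith)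
  · intro i hi1 hi2
    have hx' : (T.toEquiv ^ ((i : ℤ) * (-l))) ((T.toEquiv ^ (k + ((d - 1 : ℕ) : ℤ) * l)) z)
        = (T.toEquiv ^ (k + ((d - 1 - i : ℕ) : ℤ) * l)) z := by
      rw [← Equiv.Perm.mul_apply, ← zpow_add]
      congr 1
      have h1 : ((d - 1 : ℕ) : ℤ) = (d : ℤ) - 1 := by omega
      have h2 : ((d - 1 - i : ℕ) : ℤ) = (d : ℤ) - 1 - i := by omega
      rw [h1, h2]; ring
    have hy' : (T.toEquiv ^ ((i : ℤ) * (-l))) ((T.toEquiv ^ (k + (d : ℤ) * l)) z)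
        = (T.toEquiv ^ (k + ((d - i : ℕ) : ℤ) * l)) z := by
      rw [← Equiv.Perm.mul_apply, ← zpow_add]
      congr 1
      have h2 : ((d - i : ℕ) : ℤ) = (d : ℤ) - i := by omega
      rw [h2]; ring
    rw [hx', hy']
    have ha := key (d - 1 - i) (by omega) (by omega)
    rw [if_neg (by omega)] at ha
    have hb := key (d - i) (by omega) (by omega)
    rw [if_neg (by omega)] at hb
    calc dist ((T.toEquiv ^ (k + ((d - 1 - i : ℕ) : ℤ) * l)) z)
          ((T.toEquiv ^ (k + ((d - i : ℕ) : ℤ) * l)) z)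
        ≤ dist x ((T.toEquiv ^ (k + ((d - 1 - i : ℕ) : ℤ) * l)) z)
          + dist x ((T.toEquiv ^ (k + ((d - i : ℕ) : ℤ) * l)) z) := by
          rw [dist_comm x]; exact dist_triangle _ _ _
      _ < δ / 3 + δ / 3 := add_lt_add ha hb
      _ < δ := by linarith
end

section
/- Let (X,T) be a minimal system, d ≥ 3 and x ∈ X. If there is a sequence {n_i} in ℤ with T^{n_i}x → x, T^{2n_i}x → x, …, T^{(d−1)n_i}x → x and T^{dn_i}x → y for some y ∈ X, then (x,y) ∈ AP^{[d−1]}(X,T). -/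
open Filter Topology

/-- if `(X,T)` is minimal, `d ≥ 3`, and a sequence `{n_i} ⊆ ℤ`
satisfies `T^{j n_i} x → x` for `1 ≤ j ≤ d-1` and `T^{d n_i} x → y`, then
`(x,y) ∈ AP^[d-1](X,T)`. -/
theorem stmt_5 {X : Type*} [MetricSpace X] [CompactSpace X] (T : X ≃ₜ X)
    (hmin : ∀ x : X, Dense {y | ∃ n : ℤ, y = (T.toEquiv ^ n) x})
    (d : ℕ) (hd : 3 ≤ d) (x y : X) (n : ℕ → ℤ)
    (h1 : ∀ j : ℕ, 1 ≤ j → j ≤ d - 1 →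
      Tendsto (fun i => (T.toEquiv ^ ((j : ℤ) * n i)) x) atTop (𝓝 x))
    (h2 : Tendsto (fun i => (T.toEquiv ^ ((d : ℤ) * n i)) x) atTop (𝓝 y)) :
    (x, y) ∈ AP (d - 1) T.toEquiv := by
  intro δ hδ
  set S := T.toEquiv with hS
  have Hev : ∀ᶠ i in atTop,
      (∀ j ∈ Finset.Icc 1 (d - 1), dist ((S ^ ((j : ℤ) * n i)) x) x < δ / 2) ∧
      dist ((S ^ ((d : ℤ) * n i)) x) y < δ := by
    refine Filter.Eventually.and ?_ ?_
    · rw [eventually_all_finset]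
      intro j hj
      rw [Finset.mem_Icc] at hj
      exact Metric.tendsto_nhds.mp (h1 j hj.1 hj.2) (δ / 2) (by linarith)
    · exact Metric.tendsto_nhds.mp h2 δ hδ
  obtain ⟨k, hk1, hk2⟩ := Hev.exists
  have key : ∀ m : ℕ, m ≤ d - 1 → dist ((S ^ ((m : ℤ) * n k)) x) x < δ / 2 := by
    intro m hm
    rcases Nat.eq_zero_or_pos m with h0 | h0
    · subst h0
      simpa using half_pos hδ
    · exact hk1 m (Finset.mem_Icc.mpr ⟨h0, hm⟩)
  refine ⟨(S ^ (((d - 1 : ℕ) : ℤ) * n k)) x, (S ^ ((d : ℤ) * n k)) x, -(n k), ?_, ?_, ?_⟩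
  · have := key (d - 1) le_rfl
    rw [dist_comm] at this
    calc dist (x, y).1 _ = dist x ((S ^ (((d - 1 : ℕ) : ℤ) * n k)) x) := rfl
      _ < δ := by linarith
  · rw [show (x, y).2 = y from rfl, dist_comm]
    exact hk2
  · intro i hi1 hi2
    have comp : ∀ (a b : ℤ), (S ^ a) ((S ^ b) x) = (S ^ (a + b)) x := by
      intro a b
      rw [zpow_add]
      rfl
    rw [comp, comp]
    have e1 : (i : ℤ) * -(n k) + ((d - 1 : ℕ) : ℤ) * n k = ((d - 1 - i : ℕ) : ℤ) * n k := by
      have h : ((d - 1 - i : ℕ) : ℤ) = ((d - 1 : ℕ) : ℤ) - (i : ℤ) := by omega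
      rw [h]; ring
    have e2 : (i : ℤ) * -(n k) + (d : ℤ) * n k = ((d - i : ℕ) : ℤ) * n k := by
      have h : ((d - i : ℕ) : ℤ) = (d : ℤ) - (i : ℤ) := by omega
      rw [h]; ring
    rw [e1, e2]
    have a := key (d - 1 - i) (by omega)
    have b := key (d - i) (by omega)
    calc dist ((S ^ (((d - 1 - i : ℕ) : ℤ) * n k)) x) ((S ^ (((d - i : ℕ) : ℤ) * n k)) x)
        ≤ dist ((S ^ (((d - 1 - i : ℕ) : ℤ) * n k)) x) x
          + dist x ((S ^ (((d - i : ℕ) : ℤ) * n k)) x) := dist_triangle _ _ _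
      _ < δ := by rw [dist_comm x] ; linarith
end

section
/- If π_i : (X_i,Γ) → (Y_i,Γ), 1 ≤ i ≤ n, are proximal extensions of topological dynamical systems, then the product map π_1 × … × π_n : (Π X_i, Γ) → (Π Y_i, Γ) is a proximal extension, where Γ acts diagonally. -/
/-- a finite product of proximal extensions (with the diagonal
action of a discrete countable group Γ) is a proximal extension. -/
theorem stmt_6 {Γ : Type*} [Group Γ] [Countable Γ] {n : ℕ}
    (X Y : Fin n → Type*)
    [∀ i, MetricSpace (X i)] [∀ i, CompactSpace (X i)]
    [∀ i, MetricSpace (Y i)] [∀ i, CompactSpace (Y i)]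
    [∀ i, MulAction Γ (X i)] [∀ i, MulAction Γ (Y i)]
    (hcX : ∀ (i : Fin n) (g : Γ), Continuous fun x : X i => g • x)
    (hcY : ∀ (i : Fin n) (g : Γ), Continuous fun y : Y i => g • y)
    (π : ∀ i, X i → Y i)
    (hπc : ∀ i, Continuous (π i)) (hπs : ∀ i, Function.Surjective (π i))
    (hπe : ∀ (i : Fin n) (g : Γ) (x : X i), π i (g • x) = g • π i x)
    (hprox : ∀ (i : Fin n) (x x' : X i), π i x = π i x' →
      ∀ ε > (0 : ℝ), ∃ g : Γ, dist (g • x) (g • x') < ε) :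
    ∀ x x' : ∀ i, X i, (∀ i, π i (x i) = π i (x' i)) →
      ∀ ε > (0 : ℝ), ∃ g : Γ, dist (g • x) (g • x') < ε := by
  classical
  have key : ∀ m : ℕ, ∀ x x' : ∀ i, X i, (∀ i, π i (x i) = π i (x' i)) →
      (Finset.univ.filter fun i => x i ≠ x' i).card ≤ m →
      ∀ ε > (0 : ℝ), ∃ g : Γ, dist (g • x) (g • x') < ε := by
    intro m
    induction m with
    | zero =>
      intro x x' hπeq hcard ε hε
      have hxx : x = x' := by
        funext i
        by_contra hne
        have hi : i ∈ Finset.univ.filter fun i => x i ≠ x' i := by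
          simp [hne]
        have := Finset.card_pos.mpr ⟨i, hi⟩
        omega
      exact ⟨1, by simpa [hxx] using hε⟩
    | succ m IH =>
      intro x x' hπeq hcard ε hε
      by_cases hall : ∀ i, x i = x' i
      · exact ⟨1, by simpa [funext hall] using hε⟩
      push_neg at hall
      obtain ⟨j, hj⟩ := hall
      -- get a proximality sequence in coordinate j
      have hgk : ∀ k : ℕ, ∃ g : Γ, dist (g • x j) (g • x' j) < 1 / (k + 1 : ℝ) := by
        intro k
        exact hprox j (x j) (x' j) (hπeq j) (1 / (k + 1 : ℝ)) (by positivity)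
      choose g hg using hgk
      -- extract a convergent subsequence in the compact product
      obtain ⟨p, -, φ, hφ, hlim⟩ :=
        isCompact_univ.tendsto_subseq
          (x := fun k : ℕ => ((g k • x, g k • x') : (∀ i, X i) × (∀ i, X i)))
          (fun k => Set.mem_univ _)
      set a := p.1 with ha_def
      set a' := p.2 with ha'_def
      have ha : Filter.Tendsto (fun k => g (φ k) • x) Filter.atTop (nhds a) :=
        (continuous_fst.tendsto p).comp hlim
      have ha' : Filter.Tendsto (fun k => g (φ k) • x') Filter.atTop (nhds a') :=
        (continuous_snd.tendsto p).comp hlim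
      have hai : ∀ i, Filter.Tendsto (fun k => g (φ k) • x i) Filter.atTop (nhds (a i)) :=
        fun i => ((continuous_apply i).tendsto a).comp ha
      have hai' : ∀ i, Filter.Tendsto (fun k => g (φ k) • x' i) Filter.atTop (nhds (a' i)) :=
        fun i => ((continuous_apply i).tendsto a').comp ha'
      -- the limit pair is still in the same fiber
      have hπa : ∀ i, π i (a i) = π i (a' i) := by
        intro i
        have t1 : Filter.Tendsto (fun k => π i (g (φ k) • x i)) Filter.atTop
            (nhds (π i (a i))) := ((hπc i).tendsto (a i)).comp (hai i)
        have t2 : Filter.Tendsto (fun k => π i (g (φ k) • x' i)) Filter.atTop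
            (nhds (π i (a' i))) := ((hπc i).tendsto (a' i)).comp (hai' i)
        have heqf : (fun k => π i (g (φ k) • x i)) = fun k => π i (g (φ k) • x' i) := by
          funext k
          rw [hπe, hπe, hπeq i]
        rw [heqf] at t1
        exact tendsto_nhds_unique t1 t2
      -- coordinate j becomes equal in the limit
      have haj : a j = a' j := by
        have hd : Filter.Tendsto (fun k => dist (g (φ k) • x j) (g (φ k) • x' j))
            Filter.atTop (nhds (dist (a j) (a' j))) := (hai j).dist (hai' j)
        have hz : Filter.Tendsto (fun k : ℕ => 1 / (k + 1 : ℝ)) Filter.atTop (nhds 0) :=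
          tendsto_one_div_add_atTop_nhds_zero_nat
        have hle : dist (a j) (a' j) ≤ 0 := by
          refine le_of_tendsto_of_tendsto' hd hz ?_
          intro k
          refine le_trans (le_of_lt (hg (φ k))) ?_
          have : (k : ℝ) + 1 ≤ (φ k : ℝ) + 1 := by
            have : k ≤ φ k := hφ.le_apply
            exact_mod_cast by omega
          exact one_div_le_one_div_of_le (by positivity) this
        have := dist_nonneg (x := a j) (y := a' j)
        exact dist_le_zero.mp hle
      -- coordinates that were equal stay equal
      have heqc : ∀ i, x i = x' i → a i = a' i := by
        intro i hxi
        refine tendsto_nhds_unique (hai i) ?_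
        simpa [hxi] using hai' i
      -- the count of unequal coordinates dropped
      have hcard' : (Finset.univ.filter fun i => a i ≠ a' i).card ≤ m := by
        have hsub : (Finset.univ.filter fun i => a i ≠ a' i) ⊆
            (Finset.univ.filter fun i => x i ≠ x' i).erase j := by
          intro i hi
          simp only [Finset.mem_filter, Finset.mem_univ, true_and] at hi
          refine Finset.mem_erase.mpr ⟨?_, ?_⟩
          · rintro rfl; exact hi haj
          · simp only [Finset.mem_filter, Finset.mem_univ, true_and]
            intro hxi; exact hi (heqc i hxi)
        have hjmem : j ∈ Finset.univ.filter fun i => x i ≠ x' i := by simp [hj]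
        have h1 := Finset.card_le_card hsub
        have h2 := Finset.card_erase_lt_of_mem hjmem
        omega
      obtain ⟨h, hh⟩ := IH a a' hπa hcard' ε hε
      -- transfer proximality of (a, a') back along the subsequence
      have hact : Continuous (fun u : ∀ i, X i => h • u) :=
        continuous_pi fun i => (hcX i h).comp (continuous_apply i)
      have hfin : Filter.Tendsto (fun k => dist (h • (g (φ k) • x)) (h • (g (φ k) • x')))
          Filter.atTop (nhds (dist (h • a) (h • a'))) :=
        (((hact.tendsto a).comp ha).dist ((hact.tendsto a').comp ha'))
      have hev : ∀ᶠ k in Filter.atTop,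
          dist (h • (g (φ k) • x)) (h • (g (φ k) • x')) < ε :=
        hfin.eventually_lt_const hh
      obtain ⟨k, hk⟩ := hev.exists
      exact ⟨h * g (φ k), by simpa [mul_smul] using hk⟩
  intro x x' hπeq ε hε
  exact key n x x' hπeq (le_trans (Finset.card_le_card (Finset.subset_univ _))
    (by simp)) ε hε
end

section
/- Let (X,T) be a minimal topological dynamical system on a compact metric space, d ≥ 1, and U ⊆ X a non-empty open set. Then the closure of the τ_d-orbit of the diagonal copy U^{(d)} = {(x,…,x) : x ∈ U} has non-empty interior relative to N_d(X), where τ_d = T × T² × … × T^d and N_d(X) is the closure of the τ_d-orbit of the full diagonal Δ_d(X). -/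
/-!
By minimality, finitely many translates `T⁻ⁿ U` (`n ∈ F`) cover `X`. Since the diagonal
action `T^n × ⋯ × T^n` commutes with `τ_d`, this makes the finitely many closed sets
`(T^n × ⋯ × T^n)⁻¹ A`, `n ∈ F`, cover `N_d(X)`, where `A` is the closure of the `τ_d`-orbit of
`U^{(d)}`. As `N_d(X)` is compact, hence Baire, one of them has non-empty interior relative
to `N_d(X)`; the diagonal homeomorphism preserves `N_d(X)`, so `A` itself does.
-/

open Set

/-- `N_d(X)` as the closure of the `τ_d`-orbit of the diagonal, where
`τ_d = T × T² × … × T^d`. -/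
def NdTau {X : Type*} [MetricSpace X] (d : ℕ) (S : Equiv.Perm X) :
    Set (Fin d → X) :=
  closure {v | ∃ (x : X) (m : ℤ), v = fun i : Fin d => (S ^ (((i : ℕ) + 1) * m)) x}

def HasNonemptyInteriorIn {Y : Type*} [TopologicalSpace Y] (A K : Set Y) : Prop :=
  ∃ O : Set Y, IsOpen O ∧ (O ∩ K).Nonempty ∧ O ∩ K ⊆ A

section Topology

variable {Y : Type*} [TopologicalSpace Y]

theorem exists_hasNonemptyInteriorIn_of_closed_cover {ι : Type*} [Countable ι] {K : Set Y}
    [BaireSpace K] (hK : K.Nonempty) {C : ι → Set Y} (hC : ∀ i, IsClosed (C i))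
    (hcov : K ⊆ ⋃ i, C i) : ∃ i, HasNonemptyInteriorIn (C i) K := by
  have : Nonempty K := hK.to_subtype
  obtain ⟨i, y, hy⟩ := nonempty_interior_of_iUnion_of_closed
    (f := fun i => (Subtype.val ⁻¹' C i : Set K)) (fun i => (hC i).preimage continuous_subtype_val)
    (eq_univ_of_forall fun y => by simpa using hcov y.2)
  obtain ⟨t, hts, ht, hyt⟩ := mem_interior.mp hy
  obtain ⟨O, hO, rfl⟩ := isOpen_induced_iff.mp ht
  exact ⟨i, O, hO, ⟨y, hyt, y.2⟩, fun w ⟨hwO, hwK⟩ => hts (a := ⟨w, hwK⟩) hwO⟩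

theorem HasNonemptyInteriorIn.of_preimage_homeomorph {A K : Set Y} (h : Y ≃ₜ Y)
    (hK : MapsTo h K K) (hK' : MapsTo h.symm K K) (hA : HasNonemptyInteriorIn (h ⁻¹' A) K) :
    HasNonemptyInteriorIn A K := by
  obtain ⟨O, hO, ⟨y, hyO, hyK⟩, hOA⟩ := hA
  refine ⟨h.symm ⁻¹' O, hO.preimage h.symm.continuous, ⟨h y, by simpa using hyO, hK hyK⟩, ?_⟩
  rintro w ⟨hwO, hwK⟩
  simpa using hOA ⟨hwO, hK' hwK⟩

end Topology

namespace Homeomorph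

variable {X : Type*} [TopologicalSpace X] (T : X ≃ₜ X) (n : ℤ)

theorem coe_zpow : ⇑(T ^ n) = ⇑(T.toEquiv ^ n) :=
  congrArg DFunLike.coe (map_zpow (MonoidHom.mk' (fun h : X ≃ₜ X => h.toEquiv) fun _ _ => rfl) T n)

theorem coe_piCongrRight_zpow {ι : Type*} :
    ⇑(piCongrRight fun _ : ι => T ^ n) = fun v i => (T.toEquiv ^ n) (v i) := by
  ext v i
  simp [coe_zpow]

theorem piCongrRight_zpow_symm {ι : Type*} :
    (piCongrRight fun _ : ι => T ^ n).symm = piCongrRight fun _ : ι => T ^ (-n) := by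
  ext v i
  simp [zpow_neg]

end Homeomorph

theorem exists_finset_zpow_preimage_cover {X : Type*} [TopologicalSpace X] [CompactSpace X]
    (T : X ≃ₜ X) (hmin : ∀ x : X, Dense {y | ∃ n : ℤ, y = (T.toEquiv ^ n) x})
    {U : Set X} (hU : IsOpen U) (hUne : U.Nonempty) :
    ∃ F : Finset ℤ, univ ⊆ ⋃ n ∈ F, (T ^ n) ⁻¹' U := by
  refine isCompact_univ.elim_finite_subcover _ (fun n => hU.preimage (T ^ n).continuous) ?_
  intro x _
  obtain ⟨_, ⟨n, rfl⟩, hn⟩ := (hmin x).exists_mem_open hU hUne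
  exact mem_iUnion.mpr ⟨n, by simpa [Homeomorph.coe_zpow] using hn⟩

section TauOrbit

variable {X : Type*}

/-- The `τ_d`-orbit of `U^{(d)}`. -/
def tauOrbit (d : ℕ) (S : Equiv.Perm X) (U : Set X) : Set (Fin d → X) :=
  {v | ∃ x ∈ U, ∃ m : ℤ, v = fun i : Fin d => (S ^ (((i : ℕ) + 1) * m)) x}

theorem NdTau_eq_closure_tauOrbit_univ [MetricSpace X] (d : ℕ) (S : Equiv.Perm X) :
    NdTau d S = closure (tauOrbit d S univ) := by
  simp [NdTau, tauOrbit]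

theorem mapsTo_diag_zpow_tauOrbit (d : ℕ) (S : Equiv.Perm X) (n : ℤ) (U : Set X) :
    MapsTo (fun v i => (S ^ n) (v i)) (tauOrbit d S ((S ^ n) ⁻¹' U)) (tauOrbit d S U) := by
  rintro _ ⟨x, hx, m, rfl⟩
  exact ⟨(S ^ n) x, hx, m, funext fun i => DFunLike.congr_fun (zpow_mul_comm S _ _) x⟩

end TauOrbit

section Diagonal

variable {X : Type*} [MetricSpace X]

theorem NdTau_nonempty [Nonempty X] (d : ℕ) (S : Equiv.Perm X) : (NdTau d S).Nonempty :=
  let x : X := Classical.arbitrary X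
  ⟨fun _ => x, subset_closure ⟨x, 0, by simp⟩⟩

theorem mapsTo_piCongrRight_zpow_NdTau (d : ℕ) (T : X ≃ₜ X) (n : ℤ) :
    MapsTo (Homeomorph.piCongrRight fun _ : Fin d => T ^ n) (NdTau d T.toEquiv)
      (NdTau d T.toEquiv) := by
  rw [NdTau_eq_closure_tauOrbit_univ]
  refine MapsTo.closure ?_ (Homeomorph.continuous _)
  simpa [Homeomorph.coe_piCongrRight_zpow] using mapsTo_diag_zpow_tauOrbit d T.toEquiv n univ

theorem NdTau_subset_biUnion_preimage (d : ℕ) (T : X ≃ₜ X) {U : Set X} {F : Finset ℤ}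
    (hF : univ ⊆ ⋃ n ∈ F, (T ^ n) ⁻¹' U) :
    NdTau d T.toEquiv ⊆ ⋃ n ∈ F,
      (Homeomorph.piCongrRight fun _ : Fin d => T ^ n) ⁻¹' closure (tauOrbit d T.toEquiv U) := by
  rw [NdTau_eq_closure_tauOrbit_univ]
  refine closure_minimal ?_ (F.finite_toSet.isClosed_biUnion fun n _ =>
    isClosed_closure.preimage (Homeomorph.continuous _))
  rintro _ ⟨x, -, m, rfl⟩
  obtain ⟨n, hnF, hx⟩ := mem_iUnion₂.mp (hF (mem_univ x))
  refine mem_iUnion₂.mpr ⟨n, hnF, subset_closure ?_⟩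
  rw [Homeomorph.coe_piCongrRight_zpow]
  have hx' : x ∈ (T.toEquiv ^ n) ⁻¹' U := by simpa [Homeomorph.coe_zpow] using hx
  exact mapsTo_diag_zpow_tauOrbit d T.toEquiv n U ⟨x, hx', m, rfl⟩

end Diagonal

theorem stmt_7_general {X : Type*} [MetricSpace X] [CompactSpace X] (T : X ≃ₜ X)
    (hmin : ∀ x : X, Dense {y | ∃ n : ℤ, y = (T.toEquiv ^ n) x})
    (d : ℕ) (U : Set X) (hU : IsOpen U) (hUne : U.Nonempty) :
    ∃ O : Set (Fin d → X), IsOpen O ∧ (O ∩ NdTau d T.toEquiv).Nonempty ∧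
      O ∩ NdTau d T.toEquiv ⊆
        closure {v | ∃ x ∈ U, ∃ m : ℤ,
          v = fun i : Fin d => (T.toEquiv ^ (((i : ℕ) + 1) * m)) x} := by
  have : Nonempty X := hUne.to_type
  have : CompactSpace (NdTau d T.toEquiv) :=
    isCompact_iff_compactSpace.mp isClosed_closure.isCompact
  let Φ (n : ℤ) : (Fin d → X) ≃ₜ (Fin d → X) := Homeomorph.piCongrRight fun _ => T ^ n
  obtain ⟨F, hF⟩ := exists_finset_zpow_preimage_cover T hmin hU hUne
  obtain ⟨n, hn⟩ := exists_hasNonemptyInteriorIn_of_closed_cover (NdTau_nonempty d T.toEquiv)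
    (fun n => isClosed_closure.preimage (Φ n).continuous)
    ((NdTau_subset_biUnion_preimage d T hF).trans (iUnion₂_subset_iUnion _ _))
  refine hn.of_preimage_homeomorph (Φ n) (mapsTo_piCongrRight_zpow_NdTau d T n) ?_
  simpa only [Φ, Homeomorph.piCongrRight_zpow_symm] using mapsTo_piCongrRight_zpow_NdTau d T (-n)

/-- for a minimal system and a non-empty open `U ⊆ X`, the closure
of the `τ_d`-orbit of `U^{(d)} = Δ_d(U)` has non-empty interior relative to
`N_d(X)`. -/
theorem stmt_7 {X : Type*} [MetricSpace X] [CompactSpace X] (T : X ≃ₜ X)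
    (hmin : ∀ x : X, Dense {y | ∃ n : ℤ, y = (T.toEquiv ^ n) x})
    (d : ℕ) (hd : 1 ≤ d) (U : Set X) (hU : IsOpen U) (hUne : U.Nonempty) :
    ∃ O : Set (Fin d → X), IsOpen O ∧ (O ∩ NdTau d T.toEquiv).Nonempty ∧
      O ∩ NdTau d T.toEquiv ⊆
        closure {v | ∃ x ∈ U, ∃ m : ℤ,
          v = fun i : Fin d => (T.toEquiv ^ (((i : ℕ) + 1) * m)) x} :=
  stmt_7_general T hmin d U hU hUne
end

section
/- Let G be an abelian group and Γ ≤ G a subgroup of finite index. Let (X,G) be a minimal dynamical system on a compact metric space. If (X,Γ) is not minimal, then X decomposes as a finite disjoint union X = g_1 W ⊔ … ⊔ g_r W with r ≥ 2, where W is a Γ-minimal subset and g_i ∈ G; in particular (X,Γ) admits a non-minimal finite (hence equicontinuous) factor. -/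
/-!
By compactness and Zorn's lemma there is a `Γ`-minimal set `W`. As `Γ` is normal (here `G` is
abelian), every translate `g • W` is again `Γ`-minimal, so two translates coincide or are disjoint,
and `Γ` fixes `W`. The distinct translates are therefore indexed by `G ⧸ stabilizer G W`, a finite
set; their union is closed and `G`-invariant, hence all of `X` by `G`-minimality. There are at
least two of them, for otherwise `W = X` would be `Γ`-minimal and every `Γ`-orbit would be dense.
-/

open Pointwise Set MulAction

section MinimalSets

variable {G X : Type*} [Group G] [MulAction G X] [TopologicalSpace X]

/-- The `Γ`-minimal sets are the sets `W` with `Minimal (IsNonemptyClosedInvariant Γ) W`. -/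
def IsNonemptyClosedInvariant (Γ : Subgroup G) (A : Set X) : Prop :=
  A.Nonempty ∧ IsClosed A ∧ ∀ γ ∈ Γ, ∀ x ∈ A, γ • x ∈ A

theorem minimal_isNonemptyClosedInvariant_iff {Γ : Subgroup G} {W : Set X} :
    Minimal (IsNonemptyClosedInvariant Γ) W ↔
      W.Nonempty ∧ IsClosed W ∧ (∀ γ ∈ Γ, ∀ x ∈ W, γ • x ∈ W) ∧
        ∀ W' ⊆ W, W'.Nonempty → IsClosed W' →
          (∀ γ ∈ Γ, ∀ x ∈ W', γ • x ∈ W') → W' = W := by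
  simp only [minimal_iff, IsNonemptyClosedInvariant, and_assoc]
  refine and_congr_right fun _ => and_congr_right fun _ => and_congr_right fun _ => ?_
  exact ⟨fun h W' hW' hne hcl hinv => (h ⟨hne, hcl, hinv⟩ hW').symm,
    fun h W' ⟨hne, hcl, hinv⟩ hW' => (h W' hW' hne hcl hinv).symm⟩

theorem exists_minimal_isNonemptyClosedInvariant [CompactSpace X] [Nonempty X]
    (Γ : Subgroup G) : ∃ W : Set X, Minimal (IsNonemptyClosedInvariant Γ) W := by
  refine (zorn_superset_nonempty {A : Set X | IsNonemptyClosedInvariant Γ A} ?_ univ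
    ⟨univ_nonempty, isClosed_univ, fun _ _ _ _ => mem_univ _⟩).imp fun _ hW => hW.2
  intro c hcS hchain hcne
  have : Nonempty c := hcne.to_subtype
  refine ⟨⋂₀ c, ⟨?_, isClosed_sInter fun A hA => (hcS hA).2.1,
    fun γ hγ x hx A hA => (hcS hA).2.2 γ hγ x (hx A hA)⟩, fun A hA => sInter_subset_of_mem hA⟩
  exact IsCompact.nonempty_sInter_of_directed_nonempty_isCompact_isClosed
    (IsChain.directedOn (r := fun A B : Set X => A ⊇ B) hchain.symm) (fun A hA => (hcS hA).1)
    (fun A hA => (hcS hA).2.1.isCompact) (fun A hA => (hcS hA).2.1)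

theorem Minimal.eq_or_disjoint_of_isNonemptyClosedInvariant {Γ : Subgroup G} {W₁ W₂ : Set X}
    (h₁ : Minimal (IsNonemptyClosedInvariant Γ) W₁)
    (h₂ : Minimal (IsNonemptyClosedInvariant Γ) W₂) : W₁ = W₂ ∨ Disjoint W₁ W₂ := by
  refine or_iff_not_imp_right.2 fun hne => ?_
  have hinter : IsNonemptyClosedInvariant Γ (W₁ ∩ W₂) :=
    ⟨not_disjoint_iff_nonempty_inter.1 hne, h₁.prop.2.1.inter h₂.prop.2.1,
      fun γ hγ x hx => ⟨h₁.prop.2.2 γ hγ x hx.1, h₂.prop.2.2 γ hγ x hx.2⟩⟩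
  exact (h₁.eq_of_subset hinter inter_subset_left).symm.trans
    (h₂.eq_of_subset hinter inter_subset_right)

variable [ContinuousConstSMul G X] {Γ : Subgroup G} [Γ.Normal]

theorem IsNonemptyClosedInvariant.smul {A : Set X} (hA : IsNonemptyClosedInvariant Γ A)
    (g : G) : IsNonemptyClosedInvariant Γ (g • A) := by
  refine ⟨hA.1.smul_set, hA.2.1.smul g, ?_⟩
  rintro γ hγ _ ⟨x, hx, rfl⟩
  refine ⟨(g⁻¹ * γ * g) • x, hA.2.2 _ ?_ x hx, ?_⟩
  · simpa using ‹Γ.Normal›.conj_mem γ hγ g⁻¹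
  · simp only [smul_smul, mul_assoc, mul_inv_cancel_left]

theorem Minimal.smul_isNonemptyClosedInvariant {W : Set X}
    (hW : Minimal (IsNonemptyClosedInvariant Γ) W) (g : G) :
    Minimal (IsNonemptyClosedInvariant Γ) (g • W) := by
  refine ⟨hW.prop.smul g, fun W' hW' hsub => ?_⟩
  rw [subset_smul_set_iff] at hsub
  rw [smul_set_subset_iff_subset_inv_smul_set]
  exact (hW.eq_of_subset (hW'.smul g⁻¹) hsub).symm.subset

theorem Minimal.le_stabilizer_of_isNonemptyClosedInvariant {W : Set X}
    (hW : Minimal (IsNonemptyClosedInvariant Γ) W) : Γ ≤ stabilizer G W := by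
  intro γ hγ
  refine mem_stabilizer_iff.2 (hW.eq_of_subset (hW.prop.smul γ) ?_)
  rintro _ ⟨x, hx, rfl⟩
  exact hW.prop.2.2 γ hγ x hx

end MinimalSets

theorem MulAction.exists_fin_index_enumeration_orbit {G α : Type*} [Group G] [MulAction G α]
    (a : α) [(stabilizer G a).FiniteIndex] :
    ∃ g : Fin (stabilizer G a).index → G,
      Function.Injective (fun i => g i • a) ∧ ∀ c : G, ∃ i, c • a = g i • a := by
  have : Finite (orbit G a) := .of_equiv _ (orbitEquivQuotientStabilizer G a).symm
  let e : orbit G a ≃ Fin (stabilizer G a).index :=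
    Finite.equivFinOfCardEq (Nat.card_congr (orbitEquivQuotientStabilizer G a))
  choose g hg using fun i => mem_orbit_iff.1 (e.symm i).2
  refine ⟨g, fun i j hij => e.symm.injective (Subtype.ext ?_),
    fun c => ⟨e ⟨c • a, mem_orbit a c⟩, ?_⟩⟩
  · simpa only [hg] using hij
  · rw [hg, e.symm_apply_apply]

section MinimalActions

variable {G X : Type*} [Group G] [MulAction G X] [TopologicalSpace X] [ContinuousConstSMul G X]

theorem iUnion_smul_eq_univ_of_forall_exists_smul_eq [IsMinimal G X] {ι : Type*} [Finite ι]
    {W : Set X} (hne : W.Nonempty) (hW : IsClosed W) (g : ι → G)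
    (hg : ∀ c : G, ∃ i, c • W = g i • W) : ⋃ i, g i • W = univ := by
  refine (eq_empty_or_univ_of_smul_invariant_closed G
    (isClosed_iUnion_of_finite fun i => hW.smul (g i)) fun c => ?_).resolve_left ?_
  · rw [smul_set_iUnion]
    refine iUnion_subset fun i => ?_
    obtain ⟨j, hj⟩ := hg (c * g i)
    rw [smul_smul, hj]
    exact subset_iUnion (fun j => g j • W) j
  · obtain ⟨i, hi⟩ := hg 1
    rw [one_smul] at hi
    exact ((hi ▸ hne).mono (subset_iUnion (fun j => g j • W) i)).ne_empty

theorem dense_subgroup_orbit_of_minimal_univ {Γ : Subgroup G}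
    (h : Minimal (IsNonemptyClosedInvariant Γ) (univ : Set X)) (x : X) :
    Dense {y | ∃ γ ∈ Γ, y = γ • x} := by
  set O := {y | ∃ γ ∈ Γ, y = γ • x}
  have hinv : ∀ γ ∈ Γ, γ • O ⊆ O := by
    rintro γ hγ _ ⟨_, ⟨γ', hγ', rfl⟩, rfl⟩
    exact ⟨γ * γ', mul_mem hγ hγ', (mul_smul γ γ' x).symm⟩
  have hO : IsNonemptyClosedInvariant Γ (closure O) :=
    ⟨⟨x, subset_closure ⟨1, one_mem Γ, (one_smul G x).symm⟩⟩, isClosed_closure,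
      fun γ hγ y hy => closure_mono (hinv γ hγ) (smul_closure_subset γ O ⟨y, hy, rfl⟩)⟩
  exact dense_iff_closure_eq.2 (h.eq_of_subset hO (subset_univ _))

end MinimalActions

/-- if `G` is abelian, `Γ ≤ G` has finite index, `(X,G)` is
minimal but `(X,Γ)` is not minimal, then `X` decomposes as a disjoint union
`X = g₁W ⊔ … ⊔ g_rW` with `r ≥ 2`, where `W` is a `Γ`-minimal subset. -/
theorem stmt_12 {G : Type*} [CommGroup G] {X : Type*} [MetricSpace X]
    [CompactSpace X] [MulAction G X]
    (hcont : ∀ g : G, Continuous fun x : X => g • x)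
    (Γ : Subgroup G) (hΓ : Γ.FiniteIndex)
    (hminG : ∀ x : X, Dense (MulAction.orbit G x))
    (hnotmin : ¬ ∀ x : X, Dense {y : X | ∃ g ∈ Γ, y = g • x}) :
    ∃ r : ℕ, 2 ≤ r ∧ ∃ (W : Set X) (g : Fin r → G),
      (W.Nonempty ∧ IsClosed W ∧ (∀ γ ∈ Γ, ∀ x ∈ W, γ • x ∈ W) ∧
        ∀ W' ⊆ W, W'.Nonempty → IsClosed W' →
          (∀ γ ∈ Γ, ∀ x ∈ W', γ • x ∈ W') → W' = W) ∧
      (∀ i j : Fin r, i ≠ j → Disjoint (g i • W) (g j • W)) ∧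
      (⋃ i : Fin r, g i • W) = Set.univ := by
  have : ContinuousConstSMul G X := ⟨hcont⟩
  have : IsMinimal G X := ⟨hminG⟩
  have : Nonempty X := not_isEmpty_iff.1 fun _ => hnotmin isEmptyElim
  obtain ⟨W, hW⟩ := exists_minimal_isNonemptyClosedInvariant (X := X) Γ
  have : (stabilizer G W).FiniteIndex :=
    Subgroup.finiteIndex_of_le hW.le_stabilizer_of_isNonemptyClosedInvariant
  have hstab_ne_top : stabilizer G W ≠ ⊤ := by
    intro htop
    have hWuniv : W = univ := (eq_empty_or_univ_of_smul_invariant_closed G hW.prop.2.1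
      fun c => (mem_stabilizer_iff.1 (htop ▸ Subgroup.mem_top c)).subset).resolve_left
        hW.prop.1.ne_empty
    exact hnotmin (dense_subgroup_orbit_of_minimal_univ (hWuniv ▸ hW))
  obtain ⟨g, hinj, hcover⟩ := exists_fin_index_enumeration_orbit (G := G) W
  refine ⟨_, Subgroup.one_lt_index_of_ne_top hstab_ne_top, W, g,
    minimal_isNonemptyClosedInvariant_iff.1 hW, fun i j hij => ?_,
    iUnion_smul_eq_univ_of_forall_exists_smul_eq hW.prop.1 hW.prop.2.1 g hcover⟩
  exact ((hW.smul_isNonemptyClosedInvariant _).eq_or_disjoint_of_isNonemptyClosedInvariant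
    (hW.smul_isNonemptyClosedInvariant _)).resolve_left (hinj.ne hij)
end

section
/- Let (X,T) be a minimal equicontinuous system on a compact metric space and suppose (X,T^n) is minimal for some n ≥ 1. Then for every d ≥ 1, N_d(X,T) = N_d(X,T^n). -/
/-- if `(X,T)` is minimal equicontinuous and `(X,T^n)` is minimal
for some `n ≥ 1`, then `N_d(X,T) = N_d(X,T^n)` for every `d ≥ 1`. -/
theorem stmt_13 {X : Type*} [MetricSpace X] [CompactSpace X] (T : X ≃ₜ X)
    (hmin : ∀ x : X, Dense {y | ∃ m : ℤ, y = (T.toEquiv ^ m) x})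
    (hequi : ∀ ε > (0 : ℝ), ∃ δ > (0 : ℝ), ∀ x y : X, dist x y < δ →
      ∀ i : ℤ, dist ((T.toEquiv ^ i) x) ((T.toEquiv ^ i) y) < ε)
    (n : ℕ) (hn : 1 ≤ n)
    (hminn : ∀ x : X, Dense {y | ∃ m : ℤ, y = ((T.toEquiv ^ n) ^ m) x}) :
    ∀ d : ℕ, 1 ≤ d → NdFull d T.toEquiv = NdFull d (T.toEquiv ^ n) := by
  intro d hd
  set S := T.toEquiv with hS
  -- basic power manipulation
  have hpow : ∀ m : ℤ, (S ^ n) ^ m = S ^ ((n : ℤ) * m) := by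
    intro m; rw [← zpow_natCast, ← zpow_mul]
  have happ : ∀ (a b : ℤ) (y : X), (S ^ (a + b)) y = (S ^ a) ((S ^ b) y) := by
    intro a b y; rw [zpow_add]; rfl
  apply Set.Subset.antisymm
  · -- N_d(T) ⊆ N_d(T^n)
    unfold NdFull
    rw [← closure_closure (s := {v | ∃ (x : X) (k l : ℤ),
      v = fun i : Fin d => ((S ^ n) ^ (k + ((i : ℕ) + 1) * l)) x})]
    apply closure_mono
    rintro v ⟨x, k, l, rfl⟩
    rw [Metric.mem_closure_iff]
    intro ε hε
    have hd0 : (0 : ℝ) < d := by exact_mod_cast hd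
    have hc : (0 : ℝ) < ε / (2 * d) := by positivity
    obtain ⟨δ₁, hδ₁, hδ₁'⟩ := hequi (ε / 2) (by positivity)
    obtain ⟨δ₂, hδ₂, hδ₂'⟩ := hequi (ε / (2 * d)) hc
    -- find m with (S^n)^m x close to S^l x
    obtain ⟨y₁, ⟨m, rfl⟩, hm⟩ := Metric.mem_closure_iff.mp ((hminn x) ((S ^ l) x)) δ₂ hδ₂
    obtain ⟨y₂, ⟨k', rfl⟩, hk'⟩ := Metric.mem_closure_iff.mp ((hminn x) ((S ^ k) x)) δ₁ hδ₁
    set L : ℤ := (n : ℤ) * m with hL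
    set K : ℤ := (n : ℤ) * k' with hK
    have hmL : dist ((S ^ L) x) ((S ^ l) x) < δ₂ := by
      rw [hL, ← hpow]; rw [dist_comm]; exact hm
    have hkK : dist ((S ^ K) x) ((S ^ k) x) < δ₁ := by
      rw [hK, ← hpow]; rw [dist_comm]; exact hk'
    set c : ℝ := ε / (2 * d) with hcdef
    -- telescoping claim
    have claim : ∀ j : ℕ, ∀ Q : ℤ,
        dist ((S ^ (Q + (j : ℤ) * L)) x) ((S ^ (Q + (j : ℤ) * l)) x) ≤ j * c := by
      intro j
      induction j with
      | zero => intro Q; simp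
      | succ j ih =>
        intro Q
        have e1 : Q + ((j : ℤ) + 1) * L = (Q + (j : ℤ) * L) + L := by ring
        have e2 : Q + ((j : ℤ) + 1) * l = ((Q + l) + (j : ℤ) * l) := by ring
        have e3 : (Q + l) + (j : ℤ) * L = (Q + (j : ℤ) * L) + l := by ring
        calc dist ((S ^ (Q + ((j : ℕ) + 1 : ℤ) * L)) x) ((S ^ (Q + ((j : ℕ) + 1 : ℤ) * l)) x)
            ≤ dist ((S ^ (Q + ((j : ℕ) + 1 : ℤ) * L)) x) ((S ^ ((Q + l) + (j : ℤ) * L)) x)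
              + dist ((S ^ ((Q + l) + (j : ℤ) * L)) x) ((S ^ (Q + ((j : ℕ) + 1 : ℤ) * l)) x) :=
              dist_triangle _ _ _
          _ ≤ c + (j : ℝ) * c := by
              apply add_le_add
              · push_cast
                rw [e1, e3, happ (Q + (j : ℤ) * L) L x, happ (Q + (j : ℤ) * L) l x]
                exact le_of_lt (hδ₂' _ _ hmL _)
              · push_cast
                rw [e2]
                exact ih (Q + l)
          _ = ((j : ℝ) + 1) * c := by ring
          _ = (((j : ℕ) + 1 : ℕ) : ℝ) * c := by push_cast; ring
    -- the approximating point
    refine ⟨fun i : Fin d => ((S ^ n) ^ (k' + ((i : ℕ) + 1) * m)) x, ⟨x, k', m, rfl⟩, ?_⟩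
    rw [dist_pi_lt_iff hε]
    intro i
    have hexp : (S ^ n) ^ (k' + ((i : ℕ) + 1) * m) = S ^ (K + ((i : ℕ) + 1 : ℤ) * L) := by
      rw [hpow]; congr 1; rw [hL, hK]; ring
    rw [hexp]
    have hi1 : ((i : ℕ) + 1 : ℝ) ≤ d := by exact_mod_cast i.2
    have step1 : dist ((S ^ (k + ((i : ℕ) + 1 : ℤ) * l)) x) ((S ^ (k + ((i : ℕ) + 1 : ℤ) * L)) x)
        ≤ ((i : ℕ) + 1 : ℝ) * c := by
      have := claim ((i : ℕ) + 1) k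
      rw [dist_comm] at this
      push_cast at this ⊢
      exact this
    have step2 : dist ((S ^ (k + ((i : ℕ) + 1 : ℤ) * L)) x) ((S ^ (K + ((i : ℕ) + 1 : ℤ) * L)) x)
        < ε / 2 := by
      have e5 : k + ((i : ℕ) + 1 : ℤ) * L = (((i : ℕ) + 1 : ℤ) * L) + k := by ring
      have e6 : K + ((i : ℕ) + 1 : ℤ) * L = (((i : ℕ) + 1 : ℤ) * L) + K := by ring
      rw [e5, e6, happ, happ]
      rw [dist_comm]
      exact hδ₁' _ _ hkK _
    have hfin : ((i : ℕ) + 1 : ℝ) * c ≤ ε / 2 := by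
      rw [hcdef]
      calc ((i : ℕ) + 1 : ℝ) * (ε / (2 * d)) ≤ (d : ℝ) * (ε / (2 * d)) :=
            mul_le_mul_of_nonneg_right hi1 (by positivity)
        _ = ε / 2 := by field_simp
    calc dist ((S ^ (k + ((i : ℕ) + 1 : ℤ) * l)) x) ((S ^ (K + ((i : ℕ) + 1 : ℤ) * L)) x)
        ≤ _ + _ := dist_triangle _ ((S ^ (k + ((i : ℕ) + 1 : ℤ) * L)) x) _
      _ < ε / 2 + ε / 2 := by
          apply add_lt_add_of_le_of_lt (le_trans step1 hfin) step2
      _ = ε := by ring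
  · -- N_d(T^n) ⊆ N_d(T)
    unfold NdFull
    apply closure_mono
    rintro v ⟨x, k, l, rfl⟩
    refine ⟨x, (n : ℤ) * k, (n : ℤ) * l, ?_⟩
    funext i
    congr 1
    rw [hpow]
    congr 1
    ring
end

section
/- Let π : (X,Γ) → (Y,Γ) be a factor map of minimal systems with Γ abelian, and let k ≥ 1. Assume RP^{[k]}(X) is a closed invariant equivalence relation containing the proximal relation P(X). If for some y ∈ Y one has π^{-1}(y) × π^{-1}(y) ⊆ RP^{[k]}(X), then R_π ⊆ RP^{[k]}(X), i.e. any two points in the same fibre of π are RP^{[k]}-related. -/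
open Filter Topology Set

attribute [local instance] Ultrafilter.semigroup

section UltrafilterAction

variable {Γ : Type*} [Semigroup Γ] {X : Type*} [TopologicalSpace X] [CompactSpace X] [T2Space X]

/-- The extension of the action of `Γ` on a compact Hausdorff space `X` to
ultrafilters on `Γ` (the Ellis / Stone–Čech action): `usmul U x` is the limit
along `U` of `g • x`. -/
noncomputable def usmul [SMul Γ X] (U : Ultrafilter Γ) (x : X) : X :=
  (U.map (fun g => g • x)).lim

lemma tendsto_usmul [SMul Γ X] (U : Ultrafilter Γ) (x : X) :
    Tendsto (fun g : Γ => g • x) U (𝓝 (usmul U x)) :=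
  (U.map (fun g => g • x)).le_nhds_lim

lemma usmul_eq [SMul Γ X] {U : Ultrafilter Γ} {x z : X}
    (h : Tendsto (fun g : Γ => g • x) U (𝓝 z)) : usmul U x = z :=
  tendsto_nhds_unique (tendsto_usmul U x) h

/-- A continuous equivariant map intertwines the ultrafilter actions. -/
lemma usmul_map [SMul Γ X] {Y : Type*} [TopologicalSpace Y] [CompactSpace Y] [T2Space Y]
    [SMul Γ Y] (π : X → Y) (hc : Continuous π) (he : ∀ (g : Γ) (x : X), π (g • x) = g • π x)
    (U : Ultrafilter Γ) (x : X) : π (usmul U x) = usmul U (π x) := by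
  symm
  apply usmul_eq
  have h := (hc.tendsto (usmul U x)).comp (tendsto_usmul U x)
  simpa [Function.comp_def, he] using h

/-- The ultrafilter action is "associative" with respect to the ultrafilter
semigroup structure. -/
lemma usmul_mul [SMul Γ X] (hc : ∀ g : Γ, Continuous fun x : X => g • x)
    (hms : ∀ (g h : Γ) (x : X), (g * h) • x = g • h • x)
    (U V : Ultrafilter Γ) (x : X) :
    usmul (U * V) x = usmul U (usmul V x) := by
  apply usmul_eq
  rw [tendsto_nhds]
  intro s hs hz
  have h1 : ∀ᶠ g in (U : Filter Γ), g • usmul V x ∈ s :=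
    tendsto_usmul U (usmul V x) (hs.mem_nhds hz)
  refine (Ultrafilter.eventually_mul U V _).2 ?_
  filter_upwards [h1] with g hg
  have ht : Tendsto (fun h : Γ => g • (h • x)) V (𝓝 (g • usmul V x)) :=
    ((hc g).tendsto _).comp (tendsto_usmul V x)
  have h2 : ∀ᶠ h in (V : Filter Γ), g • (h • x) ∈ s := ht (hs.mem_nhds hg)
  filter_upwards [h2] with h hh
  rw [hms]
  exact hh

/-- Closed invariant sets are stable under the ultrafilter action. -/
lemma usmul_mem_closed_invariant [SMul Γ X] {C : Set X} (hC : IsClosed C)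
    (hCi : ∀ (g : Γ) (x : X), x ∈ C → g • x ∈ C) {x : X} (hx : x ∈ C) (U : Ultrafilter Γ) :
    usmul U x ∈ C :=
  hC.mem_of_tendsto (tendsto_usmul U x) (Eventually.of_forall fun g => hCi g x hx)

/-- Every point of the orbit closure is an ultrafilter limit of the orbit. -/
lemma exists_usmul_eq [SMul Γ X] {x z : X}
    (hz : z ∈ closure (Set.range fun g : Γ => g • x)) :
    ∃ U : Ultrafilter Γ, usmul U x = z := by
  have hne : NeBot (Filter.comap (fun g : Γ => g • x) (𝓝 z)) := by
    rw [comap_neBot_iff]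
    intro t ht
    rcases mem_closure_iff_nhds.1 hz t ht with ⟨w, hwt, g, hg⟩
    exact ⟨g, by simpa [hg] using hwt⟩
  refine ⟨Ultrafilter.of (Filter.comap (fun g : Γ => g • x) (𝓝 z)), usmul_eq ?_⟩
  exact le_trans (Filter.map_mono (Ultrafilter.of_le _)) Filter.map_comap_le

/-- There is an idempotent ultrafilter lying in a minimal closed left ideal of
`Ultrafilter Γ`; the second property expresses this minimality. -/
lemma exists_idempotent_minimal (Γ : Type*) [Semigroup Γ] [Nonempty Γ] :
    ∃ U : Ultrafilter Γ, U * U = U ∧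
      ∀ V : Ultrafilter Γ, ∃ W : Ultrafilter Γ, W * (V * U) = U := by
  -- minimal nonempty closed left ideal via Zorn
  let S : Set (Set (Ultrafilter Γ)) :=
    { L | IsClosed L ∧ L.Nonempty ∧ ∀ (V : Ultrafilter Γ) (s : Ultrafilter Γ), s ∈ L → V * s ∈ L }
  obtain ⟨L, hL⟩ : ∃ L, Minimal (· ∈ S) L := by
    refine zorn_superset _ fun c hcs hc => ?_
    refine ⟨⋂₀ c, ⟨isClosed_sInter fun t ht => (hcs ht).1, ?_, fun V s hs => ?_⟩,
      fun s hs => Set.sInter_subset_of_mem hs⟩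
    · obtain rfl | hcnemp := c.eq_empty_or_nonempty
      · rw [Set.sInter_empty]; exact Set.univ_nonempty
      have := @IsCompact.nonempty_iInter_of_directed_nonempty_isCompact_isClosed
        (Ultrafilter Γ) _ _ hcnemp.coe_sort ((↑) : c → Set (Ultrafilter Γ))
        (DirectedOn.directed_val (IsChain.directedOn hc.symm))
        (fun i => (hcs i.prop).2.1) (fun i => (hcs i.prop).1.isCompact)
        (fun i => (hcs i.prop).1)
      rwa [Set.sInter_eq_iInter]
    · rw [Set.mem_sInter]
      exact fun t ht => (hcs ht).2.2 V s (Set.mem_sInter.mp hs t ht)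
  obtain ⟨Lc, ⟨s₀, hs₀⟩, Lid⟩ := hL.prop
  -- idempotent in L
  obtain ⟨U, hUL, hUU⟩ := exists_idempotent_in_compact_subsemigroup
    (Ultrafilter.continuous_mul_left) L ⟨s₀, hs₀⟩ Lc.isCompact
    (fun a ha b hb => Lid a b hb)
  refine ⟨U, hUU, fun V => ?_⟩
  have hVU : V * U ∈ L := Lid V U hUL
  -- the closed left ideal (· * (V * U)) '' univ equals L by minimality
  have hL' : ((· * (V * U)) '' Set.univ) ∈ S := by
    refine ⟨(isCompact_univ.image (Ultrafilter.continuous_mul_left (V * U))).isClosed, ?_, ?_⟩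
    · exact ⟨U * (V * U), ⟨U, Set.mem_univ _, rfl⟩⟩
    · rintro V' _ ⟨W, -, rfl⟩
      exact ⟨V' * W, Set.mem_univ _, by simpa using mul_assoc V' W (V * U)⟩
  have hsub : ((· * (V * U)) '' Set.univ) ⊆ L := by
    rintro _ ⟨W, -, rfl⟩
    exact Lid W _ hVU
  have : L ⊆ (· * (V * U)) '' Set.univ := hL.2 hL' hsub
  rcases this hUL with ⟨W, -, hW⟩
  exact ⟨W, hW⟩

end UltrafilterAction

/-- let `π : (X,Γ) → (Y,Γ)` be a factor map of minimal systems,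
`Γ` abelian, and let `R = RP^[k](X)` be a closed invariant equivalence relation
containing the proximal relation `P(X)`. If some fibre `π⁻¹(y)` satisfies
`π⁻¹(y) × π⁻¹(y) ⊆ R`, then `R_π ⊆ R`. -/
theorem stmt_14 {Γ : Type*} [CommGroup Γ] [Countable Γ]
    {X Y : Type*} [MetricSpace X] [CompactSpace X]
    [MetricSpace Y] [CompactSpace Y] [MulAction Γ X] [MulAction Γ Y]
    (hcX : ∀ g : Γ, Continuous fun x : X => g • x)
    (hcY : ∀ g : Γ, Continuous fun y : Y => g • y)
    (hminX : ∀ x : X, Dense (MulAction.orbit Γ x))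
    (hminY : ∀ y : Y, Dense (MulAction.orbit Γ y))
    (π : X → Y) (hπc : Continuous π) (hπs : Function.Surjective π)
    (hπe : ∀ (g : Γ) (x : X), π (g • x) = g • π x)
    (k : ℕ) (hk : 1 ≤ k) (R : Set (X × X))
    (hclosed : IsClosed R)
    (hinv : ∀ (g : Γ) (p : X × X), p ∈ R → (g • p.1, g • p.2) ∈ R)
    (hequiv : Equivalence fun x y : X => (x, y) ∈ R)
    (hP : ∀ x y : X, (∀ ε > (0 : ℝ), ∃ g : Γ, dist (g • x) (g • y) < ε) →
      (x, y) ∈ R)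
    (y : Y) (hfib : ∀ x₁ x₂ : X, π x₁ = y → π x₂ = y → (x₁, x₂) ∈ R) :
    ∀ x₁ x₂ : X, π x₁ = π x₂ → (x₁, x₂) ∈ R := by
  intro x₁ x₂ hx
  obtain ⟨U, hUU, hUmin⟩ := exists_idempotent_minimal Γ
  -- the pair action preserves `R`
  have hpair : ∀ (p q : X) (T : Ultrafilter Γ), (p, q) ∈ R → (usmul T p, usmul T q) ∈ R := by
    intro p q T hpq
    have ht : Tendsto (fun g : Γ => ((g • p, g • q) : X × X)) T
        (𝓝 (usmul T p, usmul T q)) :=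
      (tendsto_usmul T p).prodMk_nhds (tendsto_usmul T q)
    exact hclosed.mem_of_tendsto ht (Filter.Eventually.of_forall fun g => hinv g (p, q) hpq)
  -- every point is proximal to its image under the idempotent `U`
  have hprox : ∀ x : X, (x, usmul U x) ∈ R := by
    intro x
    apply hP
    intro ε hε
    have hfix : usmul U (usmul U x) = usmul U x := by
      rw [← usmul_mul hcX mul_smul, hUU]
    have h1 : ∀ᶠ g in (U : Filter Γ), dist (g • x) (usmul U x) < ε / 2 :=
      Metric.tendsto_nhds.1 (tendsto_usmul U x) (ε / 2) (by linarith)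
    have h2 : ∀ᶠ g in (U : Filter Γ), dist (g • usmul U x) (usmul U x) < ε / 2 := by
      have := tendsto_usmul U (usmul U x)
      rw [hfix] at this
      exact Metric.tendsto_nhds.1 this (ε / 2) (by linarith)
    obtain ⟨g, hg1, hg2⟩ := (h1.and h2).exists
    refine ⟨g, ?_⟩
    calc dist (g • x) (g • usmul U x)
        ≤ dist (g • x) (usmul U x) + dist (usmul U x) (g • usmul U x) := dist_triangle _ _ _
      _ < ε / 2 + ε / 2 := by rw [dist_comm (usmul U x)] ; exact add_lt_add hg1 hg2
      _ = ε := by ring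
  set z₁ := usmul U x₁ with hz₁
  set z₂ := usmul U x₂ with hz₂
  have hπz : π z₁ = π z₂ := by
    rw [hz₁, hz₂, usmul_map π hπc hπe, usmul_map π hπc hπe, hx]
  -- move `(z₁, z₂)` into the fibre over `y`
  obtain ⟨V, hV⟩ : ∃ V : Ultrafilter Γ, usmul V (π z₁) = y := by
    apply exists_usmul_eq
    have : y ∈ closure (MulAction.orbit Γ (π z₁)) := (hminY (π z₁)) y
    simpa [MulAction.orbit] using this
  have hw₁ : π (usmul V z₁) = y := by rw [usmul_map π hπc hπe, hV]
  have hw₂ : π (usmul V z₂) = y := by rw [usmul_map π hπc hπe, ← hπz, hV]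
  have hw : (usmul V z₁, usmul V z₂) ∈ R := hfib _ _ hw₁ hw₂
  -- pull back using minimality of the left ideal
  obtain ⟨W, hW⟩ := hUmin V
  have hzz : (z₁, z₂) ∈ R := by
    have h1 : usmul W (usmul V z₁) = z₁ := by
      rw [hz₁, ← usmul_mul hcX mul_smul V U x₁, ← usmul_mul hcX mul_smul W (V * U) x₁, hW]
    have h2 : usmul W (usmul V z₂) = z₂ := by
      rw [hz₂, ← usmul_mul hcX mul_smul V U x₂, ← usmul_mul hcX mul_smul W (V * U) x₂, hW]
    have h := hpair _ _ W hw
    rwa [h1, h2] at h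
  exact hequiv.trans (hprox x₁) (hequiv.trans hzz (hequiv.symm (hprox x₂)))
end

section
/- Let π : (X,Γ) → (Y,Γ) be a proximal factor map between minimal systems with Γ abelian, and let k ≥ 1. Assume RP^{[k]} of X and of Y are closed invariant equivalence relations with π×π(RP^{[k]}(X)) = RP^{[k]}(Y) and P(X) ⊆ RP^{[k]}(X). Then the quotients X/RP^{[k]}(X) and Y/RP^{[k]}(Y) coincide, i.e. the induced map π' : X/RP^{[k]}(X) → Y/RP^{[k]}(Y) is injective (hence a homeomorphism). -/
/-- let `π : (X,Γ) → (Y,Γ)` be a proximal factor map of minimal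
systems, `Γ` abelian, and let `RX = RP^[k](X)`, `RY = RP^[k](Y)` be closed
invariant equivalence relations with `(π×π)(RX) = RY` and `P(X) ⊆ RX`. Then the
induced map `X/RX → Y/RY` is injective: `(π x₁, π x₂) ∈ RY → (x₁, x₂) ∈ RX`. -/
theorem stmt_15 {Γ : Type*} [CommGroup Γ] [Countable Γ]
    {X Y : Type*} [MetricSpace X] [CompactSpace X]
    [MetricSpace Y] [CompactSpace Y] [MulAction Γ X] [MulAction Γ Y]
    (hcX : ∀ g : Γ, Continuous fun x : X => g • x)
    (hcY : ∀ g : Γ, Continuous fun y : Y => g • y)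
    (hminX : ∀ x : X, Dense (MulAction.orbit Γ x))
    (hminY : ∀ y : Y, Dense (MulAction.orbit Γ y))
    (π : X → Y) (hπc : Continuous π) (hπs : Function.Surjective π)
    (hπe : ∀ (g : Γ) (x : X), π (g • x) = g • π x)
    (hprox : ∀ x₁ x₂ : X, π x₁ = π x₂ →
      ∀ ε > (0 : ℝ), ∃ g : Γ, dist (g • x₁) (g • x₂) < ε)
    (k : ℕ) (hk : 1 ≤ k) (RX : Set (X × X)) (RY : Set (Y × Y))
    (hclX : IsClosed RX) (hclY : IsClosed RY)
    (hinvX : ∀ (g : Γ) (p : X × X), p ∈ RX → (g • p.1, g • p.2) ∈ RX)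
    (hinvY : ∀ (g : Γ) (p : Y × Y), p ∈ RY → (g • p.1, g • p.2) ∈ RY)
    (heqX : Equivalence fun x y : X => (x, y) ∈ RX)
    (heqY : Equivalence fun x y : Y => (x, y) ∈ RY)
    (hlift : (fun p : X × X => (π p.1, π p.2)) '' RX = RY)
    (hP : ∀ x y : X, (∀ ε > (0 : ℝ), ∃ g : Γ, dist (g • x) (g • y) < ε) →
      (x, y) ∈ RX) :
    ∀ x₁ x₂ : X, (π x₁, π x₂) ∈ RY → (x₁, x₂) ∈ RX := by
  intro x₁ x₂ hy
  rw [← hlift] at hy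
  obtain ⟨⟨a, b⟩, hab, heq⟩ := hy
  simp only [Prod.mk.injEq] at heq
  have h1 : (x₁, a) ∈ RX := hP _ _ (hprox _ _ heq.1.symm)
  have h2 : (b, x₂) ∈ RX := hP _ _ (hprox _ _ heq.2)
  exact heqX.trans (heqX.trans h1 hab) h2
end

section
/- Let (X,T) be a minimal system on a compact metric space. Then N_d(X,T) = N_d(X,T^{-1}) for every d ≥ 1, and N_d(X,T^n) ⊆ N_d(X,T) for every nonzero integer n; moreover N_d(X,T) = ⋃_{l,k=0}^{n-1} σ_d^l τ_d^k N_d(X,T^n), where σ_d = T×…×T and τ_d = T×T²×…×T^d. -/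
/-!
Everything is a matter of exponent bookkeeping on the dense set
`{(S^{k+l}x, …, S^{k+dl}x)}` whose closure is `N_d(X,S)`: replacing `S` by `S^n` multiplies
`(k, l)` by `n`, so `S⁻¹` gives the same set and `S^n` a subset. Dividing `k` and `l` by `n`
with remainder writes every point for `T` as `σ_d^a τ_d^b` of a point for `T^n`, with
`0 ≤ a, b < n`; taking closures commutes with the finite union and with the homeomorphisms
`σ_d^a τ_d^b`.
-/

section

open Finset

variable {X : Type*}

def diagonalOrbit (d : ℕ) (S : Equiv.Perm X) : Set (Fin d → X) :=
  {v | ∃ (x : X) (k l : ℤ), v = fun i : Fin d => (S ^ (k + ((i : ℕ) + 1) * l)) x}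

theorem NdFull_eq_closure_diagonalOrbit [MetricSpace X] (d : ℕ) (S : Equiv.Perm X) :
    NdFull d S = closure (diagonalOrbit d S) :=
  rfl

/-- `σ_d^a τ_d^b`, with `σ_d = S × ⋯ × S` and `τ_d = S × S² × ⋯ × S^d`. -/
def sigmaTau {d : ℕ} (S : Equiv.Perm X) (a b : ℤ) (v : Fin d → X) : Fin d → X :=
  fun i => (S ^ (a + ((i : ℕ) + 1) * b)) (v i)

theorem diagonalOrbit_zpow_subset (d : ℕ) (S : Equiv.Perm X) (n : ℤ) :
    diagonalOrbit d (S ^ n) ⊆ diagonalOrbit d S := by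
  rintro _ ⟨x, k, l, rfl⟩
  refine ⟨x, n * k, n * l, funext fun i => ?_⟩
  rw [← zpow_mul]
  congr 2
  ring

theorem diagonalOrbit_inv (d : ℕ) (S : Equiv.Perm X) :
    diagonalOrbit d S⁻¹ = diagonalOrbit d S := by
  refine subset_antisymm ?_ ?_
  · simpa using diagonalOrbit_zpow_subset d S (-1)
  · simpa using diagonalOrbit_zpow_subset d S⁻¹ (-1)

theorem sigmaTau_pow_apply {d : ℕ} (S : Equiv.Perm X) (n : ℕ) (a b q r : ℤ) (x : X) :
    sigmaTau S a b (fun i : Fin d => ((S ^ n) ^ (q + ((i : ℕ) + 1) * r)) x) =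
      fun i : Fin d => (S ^ (a + n * q + ((i : ℕ) + 1) * (b + n * r))) x := by
  funext i
  rw [sigmaTau, ← zpow_natCast, ← zpow_mul, ← Equiv.Perm.mul_apply, ← zpow_add]
  congr 2
  ring

theorem diagonalOrbit_eq_iUnion_image_pow (d : ℕ) (S : Equiv.Perm X) {n : ℕ} (hn : 0 < n) :
    diagonalOrbit d S =
      ⋃ a ∈ range n, ⋃ b ∈ range n, sigmaTau S a b '' diagonalOrbit d (S ^ n) := by
  have hn' : (0 : ℤ) < n := by exact_mod_cast hn
  ext v
  simp only [Set.mem_iUnion, mem_range]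
  constructor
  · rintro ⟨x, k, l, rfl⟩
    have hk := Int.emod_lt_of_pos k hn'
    have hl := Int.emod_lt_of_pos l hn'
    refine ⟨(k % n).toNat, by omega, (l % n).toNat, by omega,
      _, ⟨x, k / n, l / n, rfl⟩, ?_⟩
    rw [sigmaTau_pow_apply, Int.toNat_of_nonneg (Int.emod_nonneg k hn'.ne'),
      Int.toNat_of_nonneg (Int.emod_nonneg l hn'.ne'), Int.emod_add_mul_ediv,
      Int.emod_add_mul_ediv]
  · rintro ⟨a, -, b, -, _, ⟨x, q, r, rfl⟩, rfl⟩
    exact ⟨x, a + n * q, b + n * r, sigmaTau_pow_apply S n a b q r x⟩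

theorem Homeomorph.toEquiv_zpow [TopologicalSpace X] (T : X ≃ₜ X) (m : ℤ) :
    (T ^ m).toEquiv = T.toEquiv ^ m :=
  map_zpow ({ toFun := Homeomorph.toEquiv, map_one' := rfl, map_mul' := fun _ _ => rfl } :
    (X ≃ₜ X) →* Equiv.Perm X) T m

theorem closure_image_sigmaTau [TopologicalSpace X] {d : ℕ} (T : X ≃ₜ X) (a b : ℤ)
    (s : Set (Fin d → X)) :
    closure (sigmaTau T.toEquiv a b '' s) = sigmaTau T.toEquiv a b '' closure s := by
  let e : (Fin d → X) ≃ₜ (Fin d → X) :=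
    Homeomorph.piCongrRight fun i : Fin d => T ^ (a + ((i : ℕ) + 1) * b)
  have he : ⇑e = sigmaTau T.toEquiv a b := by
    funext v i
    simp [e, sigmaTau, ← Homeomorph.toEquiv_zpow]
  rw [← he, e.image_closure]

theorem NdFull_eq_iUnion_image_pow [MetricSpace X] (d : ℕ) (T : X ≃ₜ X) {n : ℕ} (hn : 0 < n) :
    NdFull d T.toEquiv =
      ⋃ a ∈ range n, ⋃ b ∈ range n, sigmaTau T.toEquiv a b '' NdFull d (T.toEquiv ^ n) := by
  rw [NdFull_eq_closure_diagonalOrbit, diagonalOrbit_eq_iUnion_image_pow d _ hn]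
  simp only [closure_biUnion, closure_image_sigmaTau, NdFull_eq_closure_diagonalOrbit]

end

theorem stmt_19_general {X : Type*} [MetricSpace X] (T : X ≃ₜ X)
    (d : ℕ) :
    (NdFull d T.toEquiv = NdFull d T.toEquiv⁻¹) ∧
    (∀ n : ℤ, n ≠ 0 → NdFull d (T.toEquiv ^ n) ⊆ NdFull d T.toEquiv) ∧
    (∀ n : ℕ, 0 < n → NdFull d T.toEquiv =
      ⋃ l ∈ Finset.range n, ⋃ k ∈ Finset.range n,
        (fun v : Fin d → X =>
            fun i : Fin d => (T.toEquiv ^ ((l : ℤ) + ((i : ℕ) + 1) * (k : ℤ))) (v i)) ''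
          NdFull d (T.toEquiv ^ n)) :=
  ⟨by simp only [NdFull_eq_closure_diagonalOrbit, diagonalOrbit_inv],
    fun n _ => closure_mono (diagonalOrbit_zpow_subset d T.toEquiv n),
    fun _ hn => NdFull_eq_iUnion_image_pow d T hn⟩

/-- for a minimal system `(X,T)` and `d ≥ 1`:
(1) `N_d(X,T) = N_d(X,T⁻¹)`;
(2) `N_d(X,T^n) ⊆ N_d(X,T)` for every nonzero `n : ℤ`;
(3) for `n ≥ 1`, `N_d(X,T) = ⋃_{l,k=0}^{n-1} σ_d^l τ_d^k N_d(X,T^n)`. -/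
theorem stmt_19 {X : Type*} [MetricSpace X] [CompactSpace X] (T : X ≃ₜ X)
    (hmin : ∀ x : X, Dense {y | ∃ m : ℤ, y = (T.toEquiv ^ m) x})
    (d : ℕ) (hd : 1 ≤ d) :
    (NdFull d T.toEquiv = NdFull d T.toEquiv⁻¹) ∧
    (∀ n : ℤ, n ≠ 0 → NdFull d (T.toEquiv ^ n) ⊆ NdFull d T.toEquiv) ∧
    (∀ n : ℕ, 0 < n → NdFull d T.toEquiv =
      ⋃ l ∈ Finset.range n, ⋃ k ∈ Finset.range n,
        (fun v : Fin d → X =>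
            fun i : Fin d => (T.toEquiv ^ ((l : ℤ) + ((i : ℕ) + 1) * (k : ℤ))) (v i)) ''
          NdFull d (T.toEquiv ^ n)) :=
  stmt_19_general T d
end
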